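/- arXiv:1706.09052 — 5 statements merged into one kernel-verified Lean document; each statement's English description precedes it below -/
import Mathlib

section
/- If H is a finite simple graph that is a forest (contains no cycle) and contains neither 3P1 nor 2P2 as an induced subgraph, then H is isomorphic to an induced subgraph of P4, the path on four vertices. -/
open SimpleGraph

universe u
variable {V : Type*} {W : Type*}

/-- `H` is isomorphic to an induced subgraph of `G`. -/
def SimpleGraph.IsIndSubgraph {W V : Type*} (H : SimpleGraph W) (G : SimpleGraph V) : Prop :=
  ∃ f : W ↪ V, ∀ a b, G.Adj (f a) (f b) ↔ H.Adj a b

/-- A set of pairwise non-adjacent vertices. -/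
def SimpleGraph.IsIndepSet' (G : SimpleGraph V) (s : Set V) : Prop :=
  s.Pairwise fun a b => ¬ G.Adj a b

/-- The independence number of `G`. -/
noncomputable def SimpleGraph.indepNum' (G : SimpleGraph V) : ℕ :=
  sSup {n | ∃ s : Set V, G.IsIndepSet' s ∧ s.ncard = n}

/-- A matching, viewed as a set of pairwise disjoint edges of `G`. -/
def SimpleGraph.IsMatchingSet (G : SimpleGraph V) (M : Set (Sym2 V)) : Prop :=
  M ⊆ G.edgeSet ∧ M.Pairwise fun e f => ∀ x, x ∈ e → x ∉ f

/-- The matching number of `G`. -/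
noncomputable def SimpleGraph.matchingNum (G : SimpleGraph V) : ℕ :=
  sSup {n | ∃ M : Set (Sym2 V), G.IsMatchingSet M ∧ M.ncard = n}

/-- A vertex cover. -/
def SimpleGraph.IsVertexCover' (G : SimpleGraph V) (C : Set V) : Prop :=
  ∀ u v, G.Adj u v → u ∈ C ∨ v ∈ C

/-- Contraction of the edge `uv`, identifying the new vertex with `v`. -/
def SimpleGraph.contractEdge (G : SimpleGraph V) (u v : V) : SimpleGraph {x : V // x ≠ u} where
  Adj x y := x ≠ y ∧ (G.Adj x y ∨ (x.1 = v ∧ G.Adj u y) ∨ (y.1 = v ∧ G.Adj u x))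
  symm := ⟨by
    rintro x y ⟨hne, h⟩
    refine ⟨hne.symm, ?_⟩
    rcases h with h | h | h
    · exact Or.inl h.symm
    · exact Or.inr (Or.inr h)
    · exact Or.inr (Or.inl h)⟩
  loopless := ⟨fun x h => h.1 rfl⟩

/-- A maximal clique. -/
def SimpleGraph.IsMaxlClique (G : SimpleGraph V) (K : Set V) : Prop :=
  G.IsClique K ∧ ∀ K' : Set V, G.IsClique K' → K ⊆ K' → K' = K

/-! A forest has no triangles, so a vertex with three neighbours would span an induced `3P1`.
If `H` contains an induced path `a - b - c`, extend it at either end when possible. An induced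
`P4` `a - b - c - d` already contains every vertex: another vertex `x` sees neither `b` nor `c`,
and its adjacencies to `a` and `d` produce a `5`-cycle, an induced `2P2` or an induced `3P1`.
Without an induced `P3` the graph is a matching; an edge together with `3P1`- and `2P2`-freeness
leaves room for at most one further vertex, and without edges there are at most two vertices. -/

namespace SimpleGraph

variable {ι : Type*} {H : SimpleGraph W} {a b c d x : W}

theorem IsAcyclic.mem_edges_of_adj (hH : H.IsAcyclic) (hab : H.Adj a b) (p : H.Walk a b) :
    s(a, b) ∈ p.edges :=
  isBridge_iff_forall_walk_mem_edges.mp (isAcyclic_iff_forall_adj_isBridge.mp hH hab) p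

theorem IsAcyclic.not_adj_of_path₃ (hH : H.IsAcyclic) (hab : H.Adj a b) (hbc : H.Adj b c) :
    ¬ H.Adj a c := fun hac => by
  have := hH.mem_edges_of_adj hab (.cons hac (.cons hbc.symm .nil))
  simp [hab.ne, hbc.ne, hac.ne] at this

theorem IsAcyclic.not_adj_of_path₄ (hH : H.IsAcyclic) (hac : a ≠ c) (hbd : b ≠ d)
    (hab : H.Adj a b) (hbc : H.Adj b c) (hcd : H.Adj c d) : ¬ H.Adj a d := fun had => by
  have := hH.mem_edges_of_adj hab (.cons had (.cons hcd.symm (.cons hbc.symm .nil)))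
  simp [hab.ne, had.ne, hac, hbd] at this

theorem IsAcyclic.not_adj_of_path₅ (hH : H.IsAcyclic) (hac : a ≠ c) (had : a ≠ d) (hbe : b ≠ x)
    (hab : H.Adj a b) (hbc : H.Adj b c) (hcd : H.Adj c d) (hdx : H.Adj d x) : ¬ H.Adj a x :=
  fun hax => by
  have := hH.mem_edges_of_adj hab
    (.cons hax (.cons hdx.symm (.cons hcd.symm (.cons hbc.symm .nil))))
  simp [hab.ne, hax.ne, hac, had, hbe] at this

theorem isIndSubgraph_bot_fin_three (hab : a ≠ b) (hac : a ≠ c) (hbc : b ≠ c)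
    (nab : ¬ H.Adj a b) (nac : ¬ H.Adj a c) (nbc : ¬ H.Adj b c) :
    (⊥ : SimpleGraph (Fin 3)).IsIndSubgraph H := by
  have hinj : (![a, b, c]).Injective := by
    intro i j; fin_cases i <;> fin_cases j <;> simp [*, Ne.symm]
  refine ⟨⟨_, hinj⟩, fun i j => ?_⟩
  fin_cases i <;> fin_cases j <;> simp [*, H.adj_comm]

theorem isIndSubgraph_twoP2 (hac : a ≠ c) (had : a ≠ d) (hbc : b ≠ c) (hbd : b ≠ d)
    (hab : H.Adj a b) (hcd : H.Adj c d)
    (nac : ¬ H.Adj a c) (nad : ¬ H.Adj a d) (nbc : ¬ H.Adj b c) (nbd : ¬ H.Adj b d) :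
    (fromEdgeSet ({s(0, 1), s(2, 3)} : Set (Sym2 (Fin 4)))).IsIndSubgraph H := by
  have hinj : (![a, b, c, d]).Injective := by
    intro i j; fin_cases i <;> fin_cases j <;> simp [*, hab.ne, hcd.ne, Ne.symm]
  refine ⟨⟨_, hinj⟩, fun i j => ?_⟩
  fin_cases i <;> fin_cases j <;> simp [*, H.adj_comm]

theorem isIndSubgraph_of_surjective {G : SimpleGraph V} (v : ι → W) (hv : v.Surjective)
    (ℓ : ι → V) (hℓ : ℓ.Injective) (hadj : ∀ i j, G.Adj (ℓ i) (ℓ j) ↔ H.Adj (v i) (v j)) :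
    H.IsIndSubgraph G := by
  refine ⟨⟨ℓ ∘ Function.surjInv hv, hℓ.comp (Function.injective_surjInv hv)⟩, fun x y => ?_⟩
  simpa [Function.surjInv_eq hv] using hadj (Function.surjInv hv x) (Function.surjInv hv y)

theorem IsAcyclic.eq_or_eq_of_adj (hH : H.IsAcyclic)
    (h3P1 : ¬ (⊥ : SimpleGraph (Fin 3)).IsIndSubgraph H)
    (hab : H.Adj a b) (hac : H.Adj a c) (hbc : b ≠ c) (hax : H.Adj a x) : x = b ∨ x = c := by
  by_contra! hx
  exact h3P1 (isIndSubgraph_bot_fin_three hbc hx.1.symm hx.2.symm (hH.not_adj_of_path₃ hab.symm hac)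
    (hH.not_adj_of_path₃ hab.symm hax) (hH.not_adj_of_path₃ hac.symm hax))

theorem IsAcyclic.isIndSubgraph_pathGraph_four_of_path₄ (hH : H.IsAcyclic)
    (h3P1 : ¬ (⊥ : SimpleGraph (Fin 3)).IsIndSubgraph H)
    (h2P2 : ¬ (fromEdgeSet ({s(0, 1), s(2, 3)} : Set (Sym2 (Fin 4)))).IsIndSubgraph H)
    (hac : a ≠ c) (hbd : b ≠ d) (hab : H.Adj a b) (hbc : H.Adj b c) (hcd : H.Adj c d) :
    H.IsIndSubgraph (pathGraph 4) := by
  have nac := hH.not_adj_of_path₃ hab hbc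
  have nbd := hH.not_adj_of_path₃ hbc hcd
  have nad := hH.not_adj_of_path₄ hac hbd hab hbc hcd
  have had : a ≠ d := by rintro rfl; exact nac hcd.symm
  have hcover : ∀ x, x = a ∨ x = b ∨ x = c ∨ x = d := by
    intro x
    by_contra! hx
    obtain ⟨hxa, hxb, hxc, hxd⟩ := hx
    have nbx : ¬ H.Adj b x := fun h => (hH.eq_or_eq_of_adj h3P1 hab.symm hbc hac h).elim hxa hxc
    have ncx : ¬ H.Adj c x := fun h => (hH.eq_or_eq_of_adj h3P1 hbc.symm hcd hbd h).elim hxb hxd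
    by_cases hax : H.Adj a x <;> by_cases hdx : H.Adj d x
    · exact hH.not_adj_of_path₅ hxb hxc had hax.symm hab hbc hcd hdx.symm
    · exact h2P2 (isIndSubgraph_twoP2 hxc hxd hac had hax.symm hcd
        (fun h => ncx h.symm) (fun h => hdx h.symm) nac nad)
    · exact h2P2 (isIndSubgraph_twoP2 hxa hxb had.symm hbd.symm hdx.symm hab
        (fun h => hax h.symm) (fun h => nbx h.symm) (fun h => nad h.symm) (fun h => nbd h.symm))
    · exact h3P1 (isIndSubgraph_bot_fin_three hxa hxd had
        (fun h => hax h.symm) (fun h => hdx h.symm) nad)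
  refine isIndSubgraph_of_surjective ![a, b, c, d] (fun x => ?_) id Function.injective_id ?_
  · simpa [Fin.exists_fin_succ, eq_comm] using hcover x
  · intro i j
    fin_cases i <;> fin_cases j <;> simp [pathGraph_adj, *, H.adj_comm]

theorem IsAcyclic.isIndSubgraph_pathGraph_four_of_path₃ (hH : H.IsAcyclic)
    (h3P1 : ¬ (⊥ : SimpleGraph (Fin 3)).IsIndSubgraph H)
    (h2P2 : ¬ (fromEdgeSet ({s(0, 1), s(2, 3)} : Set (Sym2 (Fin 4)))).IsIndSubgraph H)
    (hac : a ≠ c) (hab : H.Adj a b) (hbc : H.Adj b c) : H.IsIndSubgraph (pathGraph 4) := by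
  by_cases hd : ∃ d, H.Adj c d ∧ d ≠ b
  · obtain ⟨d, hcd, hdb⟩ := hd
    exact hH.isIndSubgraph_pathGraph_four_of_path₄ h3P1 h2P2 hac hdb.symm hab hbc hcd
  by_cases hd' : ∃ d, H.Adj a d ∧ d ≠ b
  · obtain ⟨d, had, hdb⟩ := hd'
    exact hH.isIndSubgraph_pathGraph_four_of_path₄ h3P1 h2P2 hac.symm hdb.symm hbc.symm hab.symm had
  push Not at hd hd'
  have nac := hH.not_adj_of_path₃ hab hbc
  have hcover : ∀ x, x = a ∨ x = b ∨ x = c := by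
    intro x
    by_contra! hx
    obtain ⟨hxa, hxb, hxc⟩ := hx
    exact h3P1 (isIndSubgraph_bot_fin_three hxa hxc hac (fun h => hxb (hd' x h.symm))
      (fun h => hxb (hd x h.symm)) nac)
  refine isIndSubgraph_of_surjective ![a, b, c] (fun x => ?_) ![0, 1, 2] (by decide) ?_
  · simpa [Fin.exists_fin_succ, eq_comm] using hcover x
  · intro i j
    fin_cases i <;> fin_cases j <;> simp [pathGraph_adj, *, H.adj_comm]

theorem isIndSubgraph_pathGraph_four_of_adj
    (h3P1 : ¬ (⊥ : SimpleGraph (Fin 3)).IsIndSubgraph H)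
    (h2P2 : ¬ (fromEdgeSet ({s(0, 1), s(2, 3)} : Set (Sym2 (Fin 4)))).IsIndSubgraph H)
    (hdeg : ∀ a b c, H.Adj a b → H.Adj b c → a = c) (hab : H.Adj a b) :
    H.IsIndSubgraph (pathGraph 4) := by
  have hisol : ∀ x, x ≠ a → x ≠ b → ¬ H.Adj a x ∧ ¬ H.Adj b x := fun x hxa hxb =>
    ⟨fun h => hxb (hdeg b a x hab.symm h).symm, fun h => hxa (hdeg a b x hab h).symm⟩
  by_cases hc : ∃ c, c ≠ a ∧ c ≠ b
  · obtain ⟨c, hca, hcb⟩ := hc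
    obtain ⟨nac, nbc⟩ := hisol c hca hcb
    have hcover : ∀ x, x = a ∨ x = b ∨ x = c := by
      intro x
      by_contra! hx
      obtain ⟨hxa, hxb, hxc⟩ := hx
      obtain ⟨nax, nbx⟩ := hisol x hxa hxb
      by_cases hcx : H.Adj c x
      · exact h2P2 (isIndSubgraph_twoP2 hca.symm hxa.symm hcb.symm hxb.symm hab hcx nac nax nbc nbx)
      · exact h3P1 (isIndSubgraph_bot_fin_three hca.symm hxa.symm hxc.symm nac nax hcx)
    refine isIndSubgraph_of_surjective ![a, b, c] (fun x => ?_) ![0, 1, 3] (by decide) ?_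
    · simpa [Fin.exists_fin_succ, eq_comm] using hcover x
    · intro i j
      fin_cases i <;> fin_cases j <;> simp [pathGraph_adj, *, H.adj_comm]
  · push Not at hc
    refine isIndSubgraph_of_surjective ![a, b] (fun x => ?_) ![0, 1] (by decide) ?_
    · by_cases hxa : x = a
      exacts [⟨0, hxa.symm⟩, ⟨1, (hc x hxa).symm⟩]
    · intro i j
      fin_cases i <;> fin_cases j <;> simp [pathGraph_adj, *, H.adj_comm]

theorem isIndSubgraph_pathGraph_four_of_forall_not_adj [Fintype W]
    (h3P1 : ¬ (⊥ : SimpleGraph (Fin 3)).IsIndSubgraph H) (hE : ∀ a b, ¬ H.Adj a b) :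
    H.IsIndSubgraph (pathGraph 4) := by
  have hcard : Fintype.card W ≤ 2 := by
    by_contra! h
    obtain ⟨e⟩ : Nonempty (Fin 3 ↪ W) :=
      Function.Embedding.nonempty_of_card_le (by rw [Fintype.card_fin]; exact h)
    exact h3P1 ⟨e, fun i j => by simp [hE]⟩
  obtain ⟨e⟩ : Nonempty (W ↪ Fin 2) :=
    Function.Embedding.nonempty_of_card_le (by rwa [Fintype.card_fin])
  refine ⟨e.trans ⟨![0, 2], by decide⟩, fun x y => ?_⟩
  simp only [hE, iff_false, Function.Embedding.trans_apply, Function.Embedding.coeFn_mk]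
  generalize e x = i
  generalize e y = j
  fin_cases i <;> fin_cases j <;> simp [pathGraph_adj]

end SimpleGraph

/-- A `(3P1, 2P2)`-free forest is an induced subgraph of `P4`. -/
theorem stmt2 {W : Type*} [Fintype W] (H : SimpleGraph W) (hforest : H.IsAcyclic)
    (h3P1 : ¬ (⊥ : SimpleGraph (Fin 3)).IsIndSubgraph H)
    (h2P2 : ¬ (SimpleGraph.fromEdgeSet ({s(0, 1), s(2, 3)} : Set (Sym2 (Fin 4)))).IsIndSubgraph H) :
    H.IsIndSubgraph (pathGraph 4) := by
  by_cases hP3 : ∃ a b c, H.Adj a b ∧ H.Adj b c ∧ a ≠ c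
  · obtain ⟨a, b, c, hab, hbc, hac⟩ := hP3
    exact hforest.isIndSubgraph_pathGraph_four_of_path₃ h3P1 h2P2 hac hab hbc
  push Not at hP3
  by_cases hE : ∃ a b, H.Adj a b
  · obtain ⟨a, b, hab⟩ := hE
    exact isIndSubgraph_pathGraph_four_of_adj h3P1 h2P2 hP3 hab
  push Not at hE
  exact isIndSubgraph_pathGraph_four_of_forall_not_adj h3P1 hE
end

section
/- Let G be a finite simple graph with an edge uv, and let G' be the graph obtained from G by subdividing the edge uv twice, i.e., by deleting the edge uv and adding two new vertices x and y together with the edges ux, xy and yv. Then α(G') = α(G) + 1. -/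
open SimpleGraph

universe u
variable {V : Type*} {W : Type*}

/-- The graph obtained from `G` by subdividing the edge `uv` twice: the edge `uv` is removed and
two new vertices `x = Sum.inr 0` and `y = Sum.inr 1` are added, together with the edges `ux`,
`xy` and `yv`. -/
def SimpleGraph.subdivideTwice (G : SimpleGraph V) (u v : V) : SimpleGraph (V ⊕ Fin 2) where
  Adj a b :=
    match a, b with
    | Sum.inl a, Sum.inl b => G.Adj a b ∧ ¬(a = u ∧ b = v) ∧ ¬(a = v ∧ b = u)
    | Sum.inl a, Sum.inr i => (i = 0 ∧ a = u) ∨ (i = 1 ∧ a = v)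
    | Sum.inr i, Sum.inl b => (i = 0 ∧ b = u) ∨ (i = 1 ∧ b = v)
    | Sum.inr i, Sum.inr j => i ≠ j
  symm := ⟨by
    rintro (a | i) (b | j) h
    · exact ⟨h.1.symm, fun hc => h.2.2 ⟨hc.2, hc.1⟩, fun hc => h.2.1 ⟨hc.2, hc.1⟩⟩
    · exact h
    · exact h
    · exact h.symm⟩
  loopless := ⟨by
    rintro (a | i) h
    · exact G.loopless.irrefl a h.1
    · exact h rfl⟩


/-!
An independent set of the subdivided graph `G'` meets the path `x y` in at most one vertex, and
its trace on `V` is independent in `G` unless it contains both `u` and `v`, in which case it avoids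
`x` and `y` and becomes independent in `G` after removing `u`; hence `α(G') ≤ α(G) + 1`.
Conversely, a maximum independent set of `G` misses `u` or `v` (as `uv` is an edge), and so can be
extended by `x` or by `y` respectively.
-/

namespace SimpleGraph

theorem IsIndepSet'.insert {V : Type*} {G : SimpleGraph V} {s : Set V} {a : V}
    (hs : G.IsIndepSet' s) (ha : ∀ b ∈ s, ¬G.Adj a b) : G.IsIndepSet' (insert a s) :=
  Set.pairwise_insert.2 ⟨hs, fun b hb _ => ⟨ha b hb, fun h => ha b hb h.symm⟩⟩

section IndepNum

variable {V : Type*} [Finite V] {G : SimpleGraph V}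

theorem bddAbove_indepSet'_ncard (G : SimpleGraph V) :
    BddAbove {n | ∃ s : Set V, G.IsIndepSet' s ∧ s.ncard = n} :=
  ⟨Nat.card V, by rintro _ ⟨s, -, rfl⟩; exact Set.ncard_le_card s⟩

theorem IsIndepSet'.ncard_le_indepNum' {s : Set V} (hs : G.IsIndepSet' s) :
    s.ncard ≤ G.indepNum' :=
  le_csSup G.bddAbove_indepSet'_ncard ⟨s, hs, rfl⟩

theorem exists_isIndepSet'_ncard_eq_indepNum' (G : SimpleGraph V) :
    ∃ s : Set V, G.IsIndepSet' s ∧ s.ncard = G.indepNum' :=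
  Nat.sSup_mem ⟨0, Set.mem_ofPred.2 ⟨∅, Set.pairwise_empty _, Set.ncard_empty V⟩⟩
    G.bddAbove_indepSet'_ncard

end IndepNum

namespace subdivideTwice

variable {V : Type*} {G : SimpleGraph V} {u v : V}

@[simp]
theorem adj_inl_inl {a b : V} :
    (G.subdivideTwice u v).Adj (.inl a) (.inl b) ↔
      G.Adj a b ∧ ¬(a = u ∧ b = v) ∧ ¬(a = v ∧ b = u) :=
  Iff.rfl

@[simp]
theorem adj_inl_inr {a : V} {i : Fin 2} :
    (G.subdivideTwice u v).Adj (.inl a) (.inr i) ↔ (i = 0 ∧ a = u) ∨ (i = 1 ∧ a = v) :=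
  Iff.rfl

@[simp]
theorem adj_inr_inl {i : Fin 2} {b : V} :
    (G.subdivideTwice u v).Adj (.inr i) (.inl b) ↔ (i = 0 ∧ b = u) ∨ (i = 1 ∧ b = v) :=
  Iff.rfl

@[simp]
theorem adj_inr_inr {i j : Fin 2} : (G.subdivideTwice u v).Adj (.inr i) (.inr j) ↔ i ≠ j :=
  Iff.rfl

theorem isIndepSet'_image_inl {s : Set V} (hs : G.IsIndepSet' s) :
    (G.subdivideTwice u v).IsIndepSet' (Sum.inl '' s) :=
  (Sum.inl_injective.injOn.pairwise_image).2 fun _ ha _ hb hab hadj =>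
    hs ha hb hab (adj_inl_inl.1 hadj).1

theorem exists_isIndepSet'_insert_inr_image_inl (huv : G.Adj u v) {s : Set V}
    (hs : G.IsIndepSet' s) :
    ∃ i : Fin 2, (G.subdivideTwice u v).IsIndepSet' (insert (.inr i) (Sum.inl '' s)) := by
  by_cases hu : u ∈ s
  · have hv : v ∉ s := fun hv => hs hu hv huv.ne huv
    refine ⟨1, (isIndepSet'_image_inl hs).insert ?_⟩
    rintro _ ⟨a, ha, rfl⟩ hadj
    obtain rfl : a = v := by simpa using hadj
    exact hv ha
  · refine ⟨0, (isIndepSet'_image_inl hs).insert ?_⟩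
    rintro _ ⟨a, ha, rfl⟩ hadj
    obtain rfl : a = u := by simpa using hadj
    exact hu ha

theorem indepNum'_add_one_le [Finite V] (huv : G.Adj u v) :
    G.indepNum' + 1 ≤ (G.subdivideTwice u v).indepNum' := by
  obtain ⟨s, hs, hcard⟩ := G.exists_isIndepSet'_ncard_eq_indepNum'
  obtain ⟨i, hi⟩ := exists_isIndepSet'_insert_inr_image_inl huv hs
  have hnew : (Sum.inr i : V ⊕ Fin 2) ∉ Sum.inl '' s := by simp
  calc G.indepNum' + 1 = (insert (Sum.inr i) (Sum.inl '' s)).ncard := by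
        rw [Set.ncard_insert_of_notMem hnew, Set.ncard_image_of_injective _ Sum.inl_injective,
          hcard]
    _ ≤ _ := hi.ncard_le_indepNum'

variable {s : Set (V ⊕ Fin 2)}

theorem isIndepSet'_of_subset_preimage_inl (hs : (G.subdivideTwice u v).IsIndepSet' s)
    {T : Set V} (hT : T ⊆ Sum.inl ⁻¹' s) (huv : u ∉ T ∨ v ∉ T) : G.IsIndepSet' T := by
  intro a ha b hb hab hadj
  refine hs (hT ha) (hT hb) (Sum.inl_injective.ne hab) (adj_inl_inl.2 ⟨hadj, ?_, ?_⟩) <;>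
    rintro ⟨rfl, rfl⟩ <;> tauto

theorem ncard_preimage_inr_le_one (hs : (G.subdivideTwice u v).IsIndepSet' s) :
    (Sum.inr ⁻¹' s).ncard ≤ 1 := by
  refine (Set.ncard_le_one).2 fun i hi j hj => ?_
  by_contra hij
  exact hs hi hj (Sum.inr_injective.ne hij) (adj_inr_inr.2 hij)

theorem preimage_inr_eq_empty (hs : (G.subdivideTwice u v).IsIndepSet' s)
    (hu : u ∈ Sum.inl ⁻¹' s) (hv : v ∈ Sum.inl ⁻¹' s) : Sum.inr ⁻¹' s = ∅ := by
  refine Set.eq_empty_of_forall_notMem fun i hi => ?_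
  fin_cases i
  · exact hs hi hu Sum.inr_ne_inl (adj_inr_inl.2 (Or.inl ⟨rfl, rfl⟩))
  · exact hs hi hv Sum.inr_ne_inl (adj_inr_inl.2 (Or.inr ⟨rfl, rfl⟩))

theorem ncard_le_indepNum'_add_one [Finite V] (hs : (G.subdivideTwice u v).IsIndepSet' s) :
    s.ncard ≤ G.indepNum' + 1 := by
  set S := Sum.inl ⁻¹' s
  have hsplit : s.ncard = S.ncard + (Sum.inr ⁻¹' s).ncard := by
    conv_lhs => rw [← Set.image_preimage_inl_union_image_preimage_inr s]
    rw [Set.ncard_union_eq Set.disjoint_image_inl_image_inr,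
      Set.ncard_image_of_injective _ Sum.inl_injective,
      Set.ncard_image_of_injective _ Sum.inr_injective]
  by_cases hS : u ∈ S ∧ v ∈ S
  · have hind := isIndepSet'_of_subset_preimage_inl hs (T := S \ {u}) Set.sdiff_subset
      (Or.inl fun h => h.2 rfl)
    rw [hsplit, preimage_inr_eq_empty hs hS.1 hS.2, Set.ncard_empty,
      ← Set.ncard_sdiff_singleton_add_one hS.1]
    exact Nat.add_le_add_right hind.ncard_le_indepNum' 1
  · have hind := isIndepSet'_of_subset_preimage_inl hs subset_rfl (not_and_or.1 hS)
    rw [hsplit]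
    exact Nat.add_le_add hind.ncard_le_indepNum' (ncard_preimage_inr_le_one hs)

theorem indepNum'_le_indepNum'_add_one [Finite V] :
    (G.subdivideTwice u v).indepNum' ≤ G.indepNum' + 1 := by
  obtain ⟨s, hs, hcard⟩ := (G.subdivideTwice u v).exists_isIndepSet'_ncard_eq_indepNum'
  exact hcard ▸ ncard_le_indepNum'_add_one hs

end subdivideTwice

end SimpleGraph

/-- Subdividing an edge twice increases the independence number by exactly one. -/
theorem stmt5 {V : Type*} [Fintype V] (G : SimpleGraph V) (u v : V) (huv : G.Adj u v) :
    (G.subdivideTwice u v).indepNum' = G.indepNum' + 1 :=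
  le_antisymm subdivideTwice.indepNum'_le_indepNum'_add_one
    (subdivideTwice.indepNum'_add_one_le huv)
end

section
/- Let G be a C4-free finite simple graph and let uv be an edge of G, with G/uv the contraction of uv in which the new vertex is identified with v. Then: (1) for every maximal clique K of G/uv with v ∈ K, there is a maximal clique K' of G such that either (a) |K| = |K'| and K \ {v} = K' \ {u}, or (b) |K| = |K'| and K \ {v} = K' \ {v} (i.e., K' = K), or (c) |K| = |K'| − 1 and K \ {v} = K' \ {u, v}; and (2) the maximal cliques of G/uv that do not contain v are exactly the maximal cliques of G that contain neither u nor v. -/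
open SimpleGraph

universe u
variable {V : Type*} {W : Type*}

/-
Contracting `uv` only changes adjacencies at the merged vertex `v`, which becomes adjacent to
every neighbour of `u` or of `v`. The point of `C4`-freeness is that a clique `S` avoiding `u`
and `v`, each of whose vertices sees `u` or `v`, is seen entirely by `u` or entirely by `v`:
otherwise a vertex seen only by `u` and one seen only by `v` close an induced `C4` through `uv`.
Hence a maximal clique `K ∋ v` of `G/uv` lifts, with `S = K \ {v}`, to one of the maximal
cliques `S ∪ {u}`, `S ∪ {v}`, `S ∪ {u, v}` of `G`; and a maximal clique of `G` avoiding `u`, `v`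
stays maximal in `G/uv`, since the merged vertex cannot extend it.
-/

namespace SimpleGraph

variable {G : SimpleGraph V} {u v : V}

-- The condition also covers `w ∈ K`, which fails at `x = w` since graphs are loopless.
theorem isMaxlClique_iff {K : Set V} :
    G.IsMaxlClique K ↔ G.IsClique K ∧ ∀ w, ∃ x ∈ K, ¬ G.Adj w x := by
  refine ⟨fun hK => ⟨hK.1, fun w => ?_⟩, fun ⟨hK, hmax⟩ => ⟨hK, fun K' hK' hsub => ?_⟩⟩
  · by_contra! hw
    have hwK : w ∈ K :=
      hK.2 _ (hK.1.insert fun x hx _ => hw x hx) (Set.subset_insert w K) ▸ Set.mem_insert w K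
    exact (hw w hwK).ne rfl
  · refine Set.Subset.antisymm (fun w hw => ?_) hsub
    by_contra hwK
    obtain ⟨x, hx, hwx⟩ := hmax w
    exact hwx (hK' hw (hsub hx) fun h => hwK (h ▸ hx))

theorem isMaxlClique_insert_of_forall_adj {S : Set V} (hS : G.IsClique S)
    (hadj : ∀ y ∈ S, G.Adj u y) (hext : ∀ w, G.Adj w u → ∃ y ∈ S, ¬ G.Adj w y) :
    G.IsMaxlClique (insert u S) := by
  refine isMaxlClique_iff.2 ⟨hS.insert fun y hy _ => hadj y hy, fun w => ?_⟩
  by_cases hwu : G.Adj w u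
  · obtain ⟨y, hy, hwy⟩ := hext w hwu
    exact ⟨y, Set.mem_insert_of_mem u hy, hwy⟩
  · exact ⟨u, Set.mem_insert u S, hwu⟩

theorem adj_or_adj_of_not_isIndSubgraph_cycleGraph_four
    (hC4 : ¬ (cycleGraph 4).IsIndSubgraph G) {a b c d : V}
    (hab : G.Adj a b) (hbc : G.Adj b c) (hcd : G.Adj c d) (hda : G.Adj d a)
    (hac : a ≠ c) (hbd : b ≠ d) : G.Adj a c ∨ G.Adj b d := by
  by_contra! h
  obtain ⟨hac', hbd'⟩ := h
  have hca' : ¬ G.Adj c a := fun h => hac' h.symm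
  have hdb' : ¬ G.Adj d b := fun h => hbd' h.symm
  apply hC4
  refine ⟨⟨![a, b, c, d], fun i j hij => ?_⟩, fun i j => ?_⟩
  · fin_cases i <;> fin_cases j <;> simp_all [hab.ne, hbc.ne, hcd.ne, hda.ne,
      hab.ne', hbc.ne', hcd.ne', hda.ne', hac.symm, hbd.symm]
  · change G.Adj (![a, b, c, d] i) (![a, b, c, d] j) ↔ _
    fin_cases i <;> fin_cases j <;>
      simp [cycleGraph_adj, hab, hbc, hcd, hda, hab.symm, hbc.symm, hcd.symm, hda.symm,
        hac', hbd', hca', hdb'] <;> decide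

theorem forall_adj_or_forall_adj_of_not_isIndSubgraph_cycleGraph_four
    (hC4 : ¬ (cycleGraph 4).IsIndSubgraph G) (huv : G.Adj u v) {S : Set V} (hS : G.IsClique S)
    (hu : u ∉ S) (hv : v ∉ S) (hcover : ∀ y ∈ S, G.Adj u y ∨ G.Adj v y) :
    (∀ y ∈ S, G.Adj u y) ∨ ∀ y ∈ S, G.Adj v y := by
  by_contra! h
  obtain ⟨⟨a, ha, hua⟩, ⟨b, hb, hvb⟩⟩ := h
  have hva := (hcover a ha).resolve_left hua
  have hub := (hcover b hb).resolve_right hvb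
  have hba : b ≠ a := by rintro rfl; exact hua hub
  rcases adj_or_adj_of_not_isIndSubgraph_cycleGraph_four hC4 hub (hS hb ha hba) hva.symm
    huv.symm (fun h => hu (h ▸ ha)) (fun h => hv (h ▸ hb)) with h | h
  · exact hua h
  · exact hvb h.symm

theorem exists_isMaxlClique_insert_of_not_isIndSubgraph_cycleGraph_four
    (hC4 : ¬ (cycleGraph 4).IsIndSubgraph G) (huv : G.Adj u v) {S : Set V} (hS : G.IsClique S)
    (hu : u ∉ S) (hv : v ∉ S) (hcover : ∀ y ∈ S, G.Adj u y ∨ G.Adj v y)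
    (hmax : ∀ w, w ≠ u → w ≠ v → G.Adj w u ∨ G.Adj w v → ∃ y ∈ S, ¬ G.Adj w y) :
    ∃ K, G.IsMaxlClique K ∧ (K = insert u S ∨ K = insert v S ∨ K = insert u (insert v S)) := by
  by_cases hU : ∀ y ∈ S, G.Adj u y <;> by_cases hV : ∀ y ∈ S, G.Adj v y
  · refine ⟨_, isMaxlClique_insert_of_forall_adj (hS.insert fun y hy _ => hV y hy)
      (Set.forall_mem_insert.2 ⟨huv, hU⟩) fun w hwu => ?_, Or.inr (Or.inr rfl)⟩
    by_cases hwv : G.Adj w v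
    · obtain ⟨y, hy, hwy⟩ := hmax w hwu.ne hwv.ne (Or.inl hwu)
      exact ⟨y, Set.mem_insert_of_mem v hy, hwy⟩
    · exact ⟨v, Set.mem_insert v S, hwv⟩
  · push Not at hV
    obtain ⟨a, ha, hva⟩ := hV
    refine ⟨_, isMaxlClique_insert_of_forall_adj hS hU fun w hwu => ?_, Or.inl rfl⟩
    by_cases hwv : w = v
    · exact ⟨a, ha, hwv ▸ hva⟩
    · exact hmax w hwu.ne hwv (Or.inl hwu)
  · push Not at hU
    obtain ⟨a, ha, hua⟩ := hU
    refine ⟨_, isMaxlClique_insert_of_forall_adj hS hV fun w hwv => ?_, Or.inr (Or.inl rfl)⟩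
    by_cases hwu : w = u
    · exact ⟨a, ha, hwu ▸ hua⟩
    · exact hmax w hwu hwv.ne (Or.inr hwv)
  · exact ((forall_adj_or_forall_adj_of_not_isIndSubgraph_cycleGraph_four hC4 huv hS hu hv
      hcover).elim hU hV).elim

section contractEdge

variable {K : Set {x : V // x ≠ u}}

theorem contractEdge_adj_iff_of_ne {x y : {x : V // x ≠ u}} (hx : x.1 ≠ v) (hy : y.1 ≠ v) :
    (G.contractEdge u v).Adj x y ↔ G.Adj x y := by
  refine ⟨fun ⟨_, h⟩ => ?_, fun h => ⟨fun hxy => h.ne (congrArg Subtype.val hxy), Or.inl h⟩⟩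
  rcases h with h | ⟨h, _⟩ | ⟨h, _⟩
  exacts [h, (hx h).elim, (hy h).elim]

theorem contractEdge_adj_iff_of_eq {x y : {x : V // x ≠ u}} (hx : x.1 = v) (hy : y.1 ≠ v) :
    (G.contractEdge u v).Adj x y ↔ G.Adj v y ∨ G.Adj u y := by
  have hxy : x ≠ y := fun h => hy (h ▸ hx)
  refine ⟨fun ⟨_, h⟩ => ?_, fun h => ⟨hxy, ?_⟩⟩
  · rcases h with h | ⟨_, h⟩ | ⟨h, _⟩
    exacts [Or.inl (hx ▸ h), Or.inr h, (hy h).elim]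
  · rcases h with h | h
    exacts [Or.inl (hx ▸ h), Or.inr (Or.inl ⟨hx, h⟩)]

theorem IsClique.image_val_sdiff_contractEdge (hvu : v ≠ u)
    (hK : (G.contractEdge u v).IsClique K) : G.IsClique (Subtype.val '' (K \ {⟨v, hvu⟩})) := by
  rintro _ ⟨x, ⟨hx, hxv⟩, rfl⟩ _ ⟨y, ⟨hy, hyv⟩, rfl⟩ hxy
  exact (contractEdge_adj_iff_of_ne (fun h => hxv (Subtype.ext h))
    (fun h => hyv (Subtype.ext h))).1 (hK hx hy fun h => hxy (congrArg Subtype.val h))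

theorem IsClique.adj_or_adj_of_mem_contractEdge (hvu : v ≠ u)
    (hK : (G.contractEdge u v).IsClique K) (hvK : ⟨v, hvu⟩ ∈ K) :
    ∀ y ∈ Subtype.val '' (K \ {⟨v, hvu⟩}), G.Adj u y ∨ G.Adj v y := by
  rintro _ ⟨y, ⟨hy, hyv⟩, rfl⟩
  have hyv : y.1 ≠ v := fun h => hyv (Subtype.ext h)
  exact ((contractEdge_adj_iff_of_eq rfl hyv).1 (hK hvK hy fun h => hyv (h ▸ rfl))).symm

theorem IsMaxlClique.exists_not_adj_of_mem_contractEdge (hvu : v ≠ u)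
    (hK : (G.contractEdge u v).IsMaxlClique K) (w : V) (hwu : w ≠ u)
    (hwv : w ≠ v) (hw : G.Adj w u ∨ G.Adj w v) :
    ∃ y ∈ Subtype.val '' (K \ {⟨v, hvu⟩}), ¬ G.Adj w y := by
  obtain ⟨x, hx, hwx⟩ := (isMaxlClique_iff.1 hK).2 ⟨w, hwu⟩
  by_cases hxv : x = ⟨v, hvu⟩
  · subst hxv
    rw [adj_comm, contractEdge_adj_iff_of_eq (x := ⟨v, hvu⟩) rfl hwv] at hwx
    exact (hwx (hw.symm.imp Adj.symm Adj.symm)).elim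
  · exact ⟨x, ⟨x, ⟨hx, hxv⟩, rfl⟩, fun h => hwx ((contractEdge_adj_iff_of_ne (y := x) hwv
      fun h => hxv (Subtype.ext h : x = ⟨v, hvu⟩)).2 h)⟩

theorem IsMaxlClique.image_val_of_notMem_contractEdge (hvu : v ≠ u)
    (hK : (G.contractEdge u v).IsMaxlClique K) (hvK : ⟨v, hvu⟩ ∉ K) :
    G.IsMaxlClique (Subtype.val '' K) := by
  have hKv : ∀ x ∈ K, x.1 ≠ v := fun x hx h => hvK ((Subtype.ext h : x = ⟨v, hvu⟩) ▸ hx)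
  refine isMaxlClique_iff.2 ⟨?_, fun w => ?_⟩
  · simpa [Set.sdiff_singleton_eq_self hvK] using hK.1.image_val_sdiff_contractEdge hvu
  by_cases hw : w = u ∨ w = v
  · obtain ⟨x, hx, hwx⟩ := (isMaxlClique_iff.1 hK).2 ⟨v, hvu⟩
    rw [contractEdge_adj_iff_of_eq (x := ⟨v, hvu⟩) rfl (hKv x hx)] at hwx
    refine ⟨x, ⟨x, hx, rfl⟩, ?_⟩
    rcases hw with rfl | rfl
    exacts [fun h => hwx (Or.inr h), fun h => hwx (Or.inl h)]
  · push Not at hw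
    obtain ⟨x, hx, hwx⟩ := (isMaxlClique_iff.1 hK).2 ⟨w, hw.1⟩
    exact ⟨x, ⟨x, hx, rfl⟩, fun h => hwx ((contractEdge_adj_iff_of_ne hw.2 (hKv x hx)).2 h)⟩

end contractEdge

theorem IsMaxlClique.preimage_val_contractEdge (hC4 : ¬ (cycleGraph 4).IsIndSubgraph G)
    (huv : G.Adj u v) {K : Set V} (hK : G.IsMaxlClique K) (hu : u ∉ K) (hv : v ∉ K) :
    (G.contractEdge u v).IsMaxlClique (Subtype.val ⁻¹' K) := by
  have hKv : ∀ y ∈ K, y ≠ v := fun y hy h => hv (h ▸ hy)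
  refine isMaxlClique_iff.2 ⟨fun x hx y hy hxy => ?_, fun w => ?_⟩
  · exact (contractEdge_adj_iff_of_ne (hKv x hx) (hKv y hy)).2
      (hK.1 hx hy (Subtype.val_injective.ne hxy))
  by_cases hw : w.1 = v
  · by_contra! hwK
    have hcover : ∀ y ∈ K, G.Adj u y ∨ G.Adj v y := fun y hy =>
      ((contractEdge_adj_iff_of_eq hw (hKv y hy)).1
        (hwK ⟨y, fun h => hu (h ▸ hy)⟩ hy)).symm
    have hmax := (isMaxlClique_iff.1 hK).2
    rcases forall_adj_or_forall_adj_of_not_isIndSubgraph_cycleGraph_four hC4 huv hK.1 hu hv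
      hcover with h | h
    · obtain ⟨y, hy, huy⟩ := hmax u
      exact huy (h y hy)
    · obtain ⟨y, hy, hvy⟩ := hmax v
      exact hvy (h y hy)
  · obtain ⟨y, hy, hwy⟩ := (isMaxlClique_iff.1 hK).2 w
    exact ⟨⟨y, fun h => hu (h ▸ hy)⟩, hy,
      fun h => hwy ((contractEdge_adj_iff_of_ne hw (hKv y hy)).1 h)⟩

end SimpleGraph

/-- maximal cliques of the contraction `G/uv` of a `C4`-free graph `G`. -/
theorem stmt7 {V : Type*} [Fintype V] (G : SimpleGraph V)
    (hC4 : ¬ (cycleGraph 4).IsIndSubgraph G) (u v : V) (huv : G.Adj u v) :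
    (∀ K : Set {x : V // x ≠ u}, (G.contractEdge u v).IsMaxlClique K →
      (⟨v, huv.ne'⟩ : {x : V // x ≠ u}) ∈ K →
      ∃ K' : Set V, G.IsMaxlClique K' ∧
        ((K.ncard = K'.ncard ∧
            Subtype.val '' (K \ {(⟨v, huv.ne'⟩ : {x : V // x ≠ u})}) = K' \ {u}) ∨
         (K.ncard = K'.ncard ∧
            Subtype.val '' (K \ {(⟨v, huv.ne'⟩ : {x : V // x ≠ u})}) = K' \ {v}) ∨
         (K.ncard + 1 = K'.ncard ∧
            Subtype.val '' (K \ {(⟨v, huv.ne'⟩ : {x : V // x ≠ u})}) = K' \ {u, v}))) ∧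
    {K' : Set V | ∃ K : Set {x : V // x ≠ u}, (G.contractEdge u v).IsMaxlClique K ∧
        (⟨v, huv.ne'⟩ : {x : V // x ≠ u}) ∉ K ∧ K' = Subtype.val '' K} =
      {K' : Set V | G.IsMaxlClique K' ∧ u ∉ K' ∧ v ∉ K'} := by
  refine ⟨fun K hK hvK => ?_, Set.ext fun K' => ⟨?_, ?_⟩⟩
  · set S := Subtype.val '' (K \ {(⟨v, huv.ne'⟩ : {x : V // x ≠ u})})
    have hcard : S.ncard + 1 = K.ncard := by
      rw [Set.ncard_image_of_injective _ Subtype.val_injective,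
        Set.ncard_sdiff_singleton_add_one hvK]
    have hu : u ∉ S := fun ⟨x, _, hx⟩ => x.2 hx
    have hv : v ∉ S := fun ⟨x, ⟨_, hxv⟩, hx⟩ => hxv (Subtype.ext hx)
    have huvS : u ∉ insert v S := by rintro (h | h); exacts [huv.ne h, hu h]
    obtain ⟨K', hK', rfl | rfl | rfl⟩ :=
      exists_isMaxlClique_insert_of_not_isIndSubgraph_cycleGraph_four hC4 huv
        (hK.1.image_val_sdiff_contractEdge huv.ne') hu hv
        (hK.1.adj_or_adj_of_mem_contractEdge huv.ne' hvK)
        (hK.exists_not_adj_of_mem_contractEdge huv.ne')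
    · refine ⟨_, hK', Or.inl ⟨?_, (Set.insert_sdiff_self_of_notMem hu).symm⟩⟩
      rw [Set.ncard_insert_of_notMem hu]; omega
    · refine ⟨_, hK', Or.inr (Or.inl ⟨?_, (Set.insert_sdiff_self_of_notMem hv).symm⟩)⟩
      rw [Set.ncard_insert_of_notMem hv]; omega
    · refine ⟨_, hK', Or.inr (Or.inr ⟨?_, ?_⟩)⟩
      · rw [Set.ncard_insert_of_notMem huvS, Set.ncard_insert_of_notMem hv]; omega
      · rw [Set.insert_sdiff_of_mem _ (Set.mem_insert u {v}),
          Set.insert_sdiff_of_mem _ (Set.mem_insert_of_mem u (Set.mem_singleton v))]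
        exact (sdiff_eq_self_iff_disjoint.2 (by simp [hu, hv])).symm
  · rintro ⟨K, hK, hvK, rfl⟩
    exact ⟨hK.image_val_of_notMem_contractEdge huv.ne' hvK, fun ⟨x, _, hx⟩ => x.2 hx,
      fun ⟨x, hx, hxv⟩ => hvK ((Subtype.ext hxv : x = ⟨v, huv.ne'⟩) ▸ hx)⟩
  · rintro ⟨hK', hu, hv⟩
    exact ⟨_, hK'.preimage_val_contractEdge hC4 huv hu hv, hv,
      (Set.image_preimage_eq_of_subset fun x hx => ⟨⟨x, fun h => hu (h ▸ hx)⟩, rfl⟩).symm⟩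
end

section
/- Let G be a finite simple graph, let ℓ ≥ 1 be an integer, and let G' = 2G ⊕ K_{ℓ+1} be the disjoint union of two copies of G and a complete graph on ℓ + 1 vertices. Then ω(G) ≤ ℓ if and only if there exists an edge e of G' such that ω(G'/e) ≤ ω(G') − 1. -/
open SimpleGraph

universe u
variable {V : Type*} {W : Type*}

/-! Contracting an edge `uv` whose endpoint `v` already sees every other neighbour of `u` amounts
to deleting `u`. In `G' = 2G ⊕ K_{ℓ+1}` with `ω(G) ≤ ℓ`, contracting an edge of `K_{ℓ+1}` thus
leaves cliques of size at most `ℓ < ω(G') = ℓ + 1`. If instead `ω(G) > ℓ`, then `ω(G') = ω(G)`,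
and whichever edge is contracted, one copy of `G` survives intact, so the clique number does
not drop. -/

namespace SimpleGraph

variable {α β : Type*} {A : SimpleGraph α} {B : SimpleGraph β}

lemma cliqueNum_le_of_forall_card_le {n : ℕ}
    (h : ∀ s : Finset α, A.IsClique (s : Set α) → s.card ≤ n) : A.cliqueNum ≤ n := by
  obtain ⟨s, hs⟩ := A.exists_isNClique_cliqueNum
  exact hs.card_eq ▸ h s hs.isClique

lemma IsContained.cliqueNum_le [Finite β] (h : A ⊑ B) : A.cliqueNum ≤ B.cliqueNum := by
  obtain ⟨f⟩ := h
  obtain ⟨s, hs⟩ := A.exists_isNClique_cliqueNum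
  have hclique : B.IsClique (s.map f.toEmbedding : Set β) := by
    rw [Finset.coe_map]
    rintro _ ⟨a, ha, rfl⟩ _ ⟨b, hb, rfl⟩ hne
    exact f.toHom.map_adj (hs.isClique ha hb (ne_of_apply_ne _ hne))
  calc A.cliqueNum = (s.map f.toEmbedding).card := by rw [Finset.card_map, hs.card_eq]
    _ ≤ B.cliqueNum := hclique.card_le_cliqueNum

lemma cliqueNum_top [Fintype α] : (⊤ : SimpleGraph α).cliqueNum = Fintype.card α := by
  classical
  refine le_antisymm (cliqueNum_le_of_forall_card_le fun s _ => s.card_le_univ) ?_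
  simpa using (IsClique.top (s := ((Finset.univ : Finset α) : Set α))).card_le_cliqueNum

section Sum

variable {s : Finset (α ⊕ β)}

lemma IsClique.toLeft (hs : (A ⊕g B).IsClique (s : Set (α ⊕ β))) :
    A.IsClique (s.toLeft : Set α) := fun _ ha _ hb hne =>
  sum_adj_inl.1 <| hs (Finset.mem_toLeft.1 ha) (Finset.mem_toLeft.1 hb) (by simpa using hne)

lemma IsClique.toRight (hs : (A ⊕g B).IsClique (s : Set (α ⊕ β))) :
    B.IsClique (s.toRight : Set β) := fun _ ha _ hb hne =>
  sum_adj_inr.1 <| hs (Finset.mem_toRight.1 ha) (Finset.mem_toRight.1 hb) (by simpa using hne)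

lemma IsClique.toLeft_eq_empty_or_toRight_eq_empty
    (hs : (A ⊕g B).IsClique (s : Set (α ⊕ β))) : s.toLeft = ∅ ∨ s.toRight = ∅ := by
  by_contra! h
  obtain ⟨⟨a, ha⟩, ⟨b, hb⟩⟩ := h
  exact not_adj_sum_inl_inr a b <|
    hs (Finset.mem_toLeft.1 ha) (Finset.mem_toRight.1 hb) Sum.inl_ne_inr

lemma IsClique.card_le_max_of_sum {m n : ℕ} (hs : (A ⊕g B).IsClique (s : Set (α ⊕ β)))
    (hm : s.toLeft.card ≤ m) (hn : s.toRight.card ≤ n) : s.card ≤ max m n := by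
  rw [← Finset.card_toLeft_add_card_toRight]
  rcases hs.toLeft_eq_empty_or_toRight_eq_empty with h | h
  · rw [h, Finset.card_empty, zero_add]
    exact le_max_of_le_right hn
  · rw [h, Finset.card_empty, add_zero]
    exact le_max_of_le_left hm

lemma cliqueNum_sum [Finite α] [Finite β] :
    (A ⊕g B).cliqueNum = max A.cliqueNum B.cliqueNum :=
  le_antisymm
    (cliqueNum_le_of_forall_card_le fun _ hs =>
      hs.card_le_max_of_sum hs.toLeft.card_le_cliqueNum hs.toRight.card_le_cliqueNum)
    (max_le (IsContained.cliqueNum_le ⟨Embedding.sumInl.toCopy⟩)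
      (IsContained.cliqueNum_le ⟨Embedding.sumInr.toCopy⟩))

lemma IsClique.card_le_of_sum_top_of_inr_notMem [Finite α] [Fintype β] {b : β}
    (hs : (A ⊕g ⊤).IsClique (s : Set (α ⊕ β))) (hb : Sum.inr b ∉ s) :
    s.card ≤ max A.cliqueNum (Fintype.card β - 1) := by
  refine hs.card_le_max_of_sum hs.toLeft.card_le_cliqueNum ?_
  have hb' : b ∉ s.toRight := by simpa using hb
  have := Finset.card_lt_univ_of_notMem hb'
  omega

end Sum

section Contraction

variable {γ : Type*} (G : SimpleGraph γ) {u : γ}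

lemma comap_val_le_contractEdge (u v : γ) :
    G.comap (Subtype.val : {x // x ≠ u} → γ) ≤ G.contractEdge u v :=
  fun _ _ h => ⟨h.ne, Or.inl h⟩

lemma contractEdge_eq_comap_val {v : γ} (h : ∀ y, G.Adj u y → y ≠ v → G.Adj v y) :
    G.contractEdge u v = G.comap (Subtype.val : {x // x ≠ u} → γ) := by
  refine le_antisymm ?_ (G.comap_val_le_contractEdge u v)
  have hnew : ∀ x y : {x // x ≠ u}, x ≠ y → x.1 = v → G.Adj u y → G.Adj x y := by
    intro x y hne hx huy
    rw [hx]
    exact h y huy fun e => hne (Subtype.ext (hx.trans e.symm))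
  rintro x y ⟨hne, hxy | ⟨hx, huy⟩ | ⟨hy, hux⟩⟩
  · exact hxy
  · exact hnew x y hne hx huy
  · exact (hnew y x hne.symm hy hux).symm

lemma cliqueNum_comap_val_le {n : ℕ}
    (h : ∀ s : Finset γ, G.IsClique (s : Set γ) → u ∉ s → s.card ≤ n) :
    (G.comap (Subtype.val : {x // x ≠ u} → γ)).cliqueNum ≤ n := by
  refine cliqueNum_le_of_forall_card_le fun s hs => ?_
  rw [← Finset.card_map (Function.Embedding.subtype _)]
  refine h _ ?_ (by simp)
  rw [Finset.coe_map]
  rintro _ ⟨x, hx, rfl⟩ _ ⟨y, hy, rfl⟩ hne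
  exact hs hx hy (ne_of_apply_ne _ hne)

lemma IsContained.contractEdge {f : Copy A G} (hu : ∀ a, f a ≠ u) (v : γ) :
    A ⊑ G.contractEdge u v :=
  ⟨(Copy.ofLE _ _ (G.comap_val_le_contractEdge u v)).comp
    ⟨⟨fun a => ⟨f a, hu a⟩, fun h => f.toHom.map_adj h⟩,
      fun _ _ e => f.injective (congrArg Subtype.val e)⟩⟩

end Contraction

end SimpleGraph

/-- Let `G' = 2G ⊕ K_{ℓ+1}` (disjoint union of two copies of `G` and a complete
graph on `ℓ + 1` vertices), for `ℓ ≥ 1`. Then `ω(G) ≤ ℓ` iff some edge of `G'` can be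
contracted so that the clique number drops, i.e. there is an edge `e` of `G'` with
`ω(G'/e) ≤ ω(G') - 1`. -/
theorem stmt16 {V : Type*} [Fintype V] (G : SimpleGraph V) (ℓ : ℕ) (hℓ : 1 ≤ ℓ) :
    G.cliqueNum ≤ ℓ ↔
      ∃ u v : (V ⊕ V) ⊕ Fin (ℓ + 1),
        ((G ⊕g G) ⊕g completeGraph (Fin (ℓ + 1))).Adj u v ∧
        (((G ⊕g G) ⊕g completeGraph (Fin (ℓ + 1))).contractEdge u v).cliqueNum ≤
          ((G ⊕g G) ⊕g completeGraph (Fin (ℓ + 1))).cliqueNum - 1 := by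
  set G' := (G ⊕g G) ⊕g completeGraph (Fin (ℓ + 1))
  have hG' : G'.cliqueNum = max G.cliqueNum (ℓ + 1) := by
    simp [G', cliqueNum_sum, cliqueNum_top]
  constructor
  · intro hω
    have h01 : (0 : Fin (ℓ + 1)) ≠ 1 := by simp [Fin.ext_iff]; omega
    refine ⟨.inr 0, .inr 1, by simpa [G'] using h01, ?_⟩
    rw [G'.contractEdge_eq_comap_val (by rintro (_ | j) <;> simp [G']; tauto)]
    refine G'.cliqueNum_comap_val_le fun s hs h0 => ?_
    have := hs.card_le_of_sum_top_of_inr_notMem h0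
    simp only [cliqueNum_sum, max_self, Fintype.card_fin] at this
    omega
  · rintro ⟨u, v, -, hle⟩
    by_contra! hω
    have hcopy : ∃ f : Copy G G', ∀ a, f a ≠ u := by
      rcases u with (_ | _) | _
      · exact ⟨(Embedding.sumInl.comp Embedding.sumInr).toCopy, by simp⟩
      all_goals exact ⟨(Embedding.sumInl.comp Embedding.sumInl).toCopy, by simp⟩
    obtain ⟨f, hf⟩ := hcopy
    have := (IsContained.contractEdge G' hf v).cliqueNum_le
    omega
end

section
/- Let G be a 3P1-free finite simple graph on n vertices, and let d and k be integers with 0 ≤ d ≤ χ(G) and k ≥ 0. Then there exists a set S of at most k vertices of G such that χ(G − S) ≤ χ(G) − d if and only if k ≥ max(d, n + 2d − 2χ(G)) (the maximum taken over the integers). -/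
open SimpleGraph

universe u
variable {V : Type*} {W : Type*}

/-- The chromatic number of a (finite) graph as a natural number. -/
noncomputable def SimpleGraph.chromNum (G : SimpleGraph V) : ℕ :=
  G.chromaticNumber.toNat

open Finset

/-!
In a `3P1`-free graph every colour class has at most two vertices, so `n ≤ 2χ(G)` for `G` and
for each of its induced subgraphs. Deleting `S` lowers `χ` by at most `|S|`, and what is left
has at least `n - |S|` vertices, hence needs at least `(n - |S|) / 2` colours: this gives both
lower bounds on `|S|`. Conversely, in an optimal colouring delete the `d` smallest colour
classes: either all of them have at most one vertex, or every class kept has exactly two, and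
then `n + 2d - 2χ(G)` vertices are deleted.
-/

theorem ncard_preimage_eq_sum_card_fiber {α : Type*} [Fintype V] [DecidableEq α] (C : V → α)
    (D : Finset α) : (C ⁻¹' D).ncard = ∑ c ∈ D, #{v | C v = c} := by
  classical
  rw [Set.ncard_eq_toFinset_card', card_eq_sum_card_fiberwise (f := C) (t := D)
    fun v hv => by simpa using hv]
  refine sum_congr rfl fun c hc => congrArg card ?_
  ext v
  simp only [Set.mem_toFinset, Set.mem_preimage, mem_filter, mem_univ, true_and, mem_coe]
  exact ⟨And.right, fun h => ⟨h ▸ hc, h⟩⟩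

theorem Finset.exists_card_eq_sum_le_max_of_le_two {ι : Type*} [Fintype ι] [DecidableEq ι]
    {f : ι → ℕ} (hf : ∀ i, f i ≤ 2) {d : ℕ} (hd : d ≤ Fintype.card ι) :
    ∃ D : Finset ι, #D = d ∧
      ((∑ i ∈ D, f i : ℕ) : ℤ) ≤
        max (d : ℤ) ((∑ i, f i : ℕ) + 2 * d - 2 * Fintype.card ι) := by
  let A : Finset ι := {i | f i ≤ 1}
  by_cases hA : d ≤ #A
  · obtain ⟨D, hDA, rfl⟩ := exists_subset_card_eq hA
    refine ⟨D, rfl, le_max_of_le_left ?_⟩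
    have := sum_le_card_nsmul D f 1 fun i hi => (mem_filter.mp (hDA hi)).2
    simp only [smul_eq_mul, mul_one] at this
    exact_mod_cast this
  · obtain ⟨D, hAD, -, rfl⟩ :=
      exists_subsuperset_card_eq (subset_univ A) (not_le.mp hA).le (by simpa using hd)
    refine ⟨D, rfl, le_max_of_le_right ?_⟩
    have htwo : ∀ i ∈ Dᶜ, f i = 2 := fun i hi => by
      have : i ∉ A := fun h => mem_compl.mp hi (hAD h)
      simp only [A, mem_filter, mem_univ, true_and] at this
      exact le_antisymm (hf i) (by omega)
    have hsplit := sum_add_sum_compl D f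
    rw [sum_const_nat htwo, card_compl] at hsplit
    have hDc : #D ≤ Fintype.card ι := card_le_univ D
    omega

namespace SimpleGraph

variable {G : SimpleGraph V}

theorem indepSetFree_of_not_isIndSubgraph {n : ℕ}
    (h : ¬ (⊥ : SimpleGraph (Fin n)).IsIndSubgraph G) : G.IndepSetFree n := by
  intro t ht
  let e : Fin n ≃ t := (t.equivFinOfCardEq ht.card_eq).symm
  refine h ⟨e.toEmbedding.trans (Function.Embedding.subtype _), fun a b => ?_⟩
  simp only [bot_adj, iff_false]
  by_cases hab : a = b
  · subst hab; exact G.loopless.irrefl _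
  · exact ht.isIndepSet (e a).2 (e b).2 (by simpa [e] using hab)

theorem IndepSetFree.comap {H : SimpleGraph W} {n : ℕ} (f : H ↪g G) (h : G.IndepSetFree n) :
    H.IndepSetFree n := by
  intro t ht
  refine h (t.map f.toEmbedding) ⟨?_, by simp [ht.card_eq]⟩
  rw [coe_map]
  rintro _ ⟨a, ha, rfl⟩ _ ⟨b, hb, rfl⟩ hne
  exact f.map_adj_iff.not.mpr (ht.isIndepSet ha hb (ne_of_apply_ne _ hne))

theorem IsIndepSet.card_le_of_indepSetFree {m : ℕ} (h : G.IndepSetFree (m + 1))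
    {s : Finset V} (hs : G.IsIndepSet s) : #s ≤ m := by
  by_contra! hlt
  obtain ⟨t, hts, ht⟩ := exists_subset_card_eq (Nat.succ_le_of_lt hlt)
  exact h t ⟨hs.mono (coe_subset.mpr hts), ht⟩

theorem colorable_chromNum [Fintype V] (G : SimpleGraph V) : G.Colorable G.chromNum :=
  G.colorable_chromaticNumber_of_fintype

theorem Colorable.chromNum_le {m : ℕ} (h : G.Colorable m) : G.chromNum ≤ m :=
  ENat.toNat_le_of_le_natCast h.chromaticNumber_le

theorem Coloring.card_fiber_le_of_indepSetFree [Fintype V] {α : Type*} [DecidableEq α]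
    (C : G.Coloring α) {m : ℕ} (h : G.IndepSetFree (m + 1)) (c : α) : #{v | C v = c} ≤ m :=
  IsIndepSet.card_le_of_indepSetFree h <| by
    simpa [Coloring.colorClass] using C.isIndepSet_colorClass c

theorem card_le_mul_chromNum_of_indepSetFree [Fintype V] {m : ℕ} (h : G.IndepSetFree (m + 1)) :
    Fintype.card V ≤ m * G.chromNum := by
  obtain ⟨C⟩ := G.colorable_chromNum
  have key := card_le_mul_card_image_of_maps_to (s := univ) (t := univ)
    (fun v _ => mem_univ (C v)) m fun c _ => C.card_fiber_le_of_indepSetFree h c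
  rwa [card_univ, card_univ, Fintype.card_fin] at key

theorem chromNum_le_chromNum_induce_compl_add_ncard [Fintype V] (G : SimpleGraph V) (S : Set V) :
    G.chromNum ≤ (G.induce Sᶜ).chromNum + S.ncard := by
  classical
  obtain ⟨C⟩ := (G.induce Sᶜ).colorable_chromNum
  let C' : G.Coloring (Fin (G.induce Sᶜ).chromNum ⊕ S) := Coloring.mk
    (fun v => if hv : v ∈ S then .inr ⟨v, hv⟩ else .inl (C ⟨v, hv⟩))
    (by
      intro u v huv
      split_ifs with hu hv hv
      · simpa using G.ne_of_adj huv
      · simp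
      · simp
      · simpa using C.valid (v := ⟨u, hu⟩) (w := ⟨v, hv⟩) huv)
  simpa [Set.ncard_eq_toFinset_card'] using C'.colorable.chromNum_le

theorem Coloring.colorable_induce_compl_preimage {α : Type*} [Fintype α] [DecidableEq α]
    (C : G.Coloring α) (D : Finset α) :
    (G.induce (C ⁻¹' D)ᶜ).Colorable (Fintype.card α - #D) := by
  let C' : (G.induce (C ⁻¹' D)ᶜ).Coloring ↥(Dᶜ : Finset α) :=
    Coloring.mk (fun v => ⟨C v, mem_compl.mpr v.2⟩) fun huv => by simpa using C.valid huv
  simpa [card_compl] using C'.colorable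

theorem max_le_ncard_of_chromNum_induce_compl_le [Fintype V] (h : G.IndepSetFree 3) {d : ℕ}
    (hd : d ≤ G.chromNum) {S : Set V} (hS : (G.induce Sᶜ).chromNum ≤ G.chromNum - d) :
    max (d : ℤ) (Fintype.card V + 2 * d - 2 * G.chromNum) ≤ S.ncard := by
  classical
  have hdel := G.chromNum_le_chromNum_induce_compl_add_ncard S
  have hrest := card_le_mul_chromNum_of_indepSetFree (h.comap (Embedding.induce Sᶜ))
  have hcard : S.ncard + Fintype.card ↥Sᶜ = Fintype.card V := by
    rw [← Nat.card_eq_fintype_card, Nat.card_coe_set_eq, Set.ncard_add_ncard_compl,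
      Nat.card_eq_fintype_card]
  omega

theorem exists_ncard_le_max_chromNum_induce_compl_le [Fintype V] (h : G.IndepSetFree 3) {d : ℕ}
    (hd : d ≤ G.chromNum) : ∃ S : Set V,
      (S.ncard : ℤ) ≤ max (d : ℤ) (Fintype.card V + 2 * d - 2 * G.chromNum) ∧
      (G.induce Sᶜ).chromNum ≤ G.chromNum - d := by
  obtain ⟨C⟩ := G.colorable_chromNum
  obtain ⟨D, hD, hsum⟩ :=
    exists_card_eq_sum_le_max_of_le_two (C.card_fiber_le_of_indepSetFree h) (by simpa using hd)
  refine ⟨C ⁻¹' D, ?_, by simpa [hD] using (C.colorable_induce_compl_preimage D).chromNum_le⟩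
  have htotal : ∑ c, #{v | C v = c} = Fintype.card V :=
    (card_eq_sum_card_fiberwise fun v _ => mem_univ (C v)).symm
  rw [ncard_preimage_eq_sum_card_fiber]
  rwa [htotal, Fintype.card_fin] at hsum

end SimpleGraph

/-- For a `3P1`-free graph `G` on `n` vertices and integers `0 ≤ d ≤ χ(G)` and
`k ≥ 0`: there is a set `S` of at most `k` vertices with `χ(G - S) ≤ χ(G) - d` iff
`k ≥ max(d, n + 2d - 2χ(G))` (maximum over the integers). -/
theorem stmt19 {V : Type*} [Fintype V] (G : SimpleGraph V) (n : ℕ) (hn : Fintype.card V = n)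
    (hfree : ¬ (⊥ : SimpleGraph (Fin 3)).IsIndSubgraph G)
    (d k : ℕ) (hd : d ≤ G.chromNum) :
    (∃ S : Set V, S.ncard ≤ k ∧ (G.induce Sᶜ).chromNum ≤ G.chromNum - d) ↔
      max (d : ℤ) ((n : ℤ) + 2 * (d : ℤ) - 2 * (G.chromNum : ℤ)) ≤ (k : ℤ) := by
  have h := indepSetFree_of_not_isIndSubgraph hfree
  subst hn
  constructor
  · rintro ⟨S, hSk, hS⟩
    exact (max_le_ncard_of_chromNum_induce_compl_le h hd hS).trans (by exact_mod_cast hSk)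
  · intro hk
    obtain ⟨S, hSmax, hS⟩ := exists_ncard_le_max_chromNum_induce_compl_le h hd
    exact ⟨S, by exact_mod_cast hSmax.trans hk, hS⟩
end
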